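/- Let P(λ) be an n×n matrix polynomial, w a weight function, ε > 0, and let μ ∈ ℂ with s_n(μ) ≤ ε w(|μ|) and μ not an eigenvalue of P, where the smallest singular value s_n(μ) of P(μ) has multiplicity k ≥ 1 (i.e., s_{n-k}(μ) > s_{n-k+1}(μ) = ... = s_n(μ) > 0). Then there exists a matrix polynomial Q(λ) = Σ (P_j + Δ_j) λ^j with ‖Δ_j‖ ≤ ε w_j for all j such that μ is an eigenvalue of Q with geometric multiplicity exactly k. -/

import Mathlib

open Matrix Finset

/-- The singular values of a complex `N × N` matrix, arranged in decreasing order: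
`svals A 0 ≥ svals A 1 ≥ ... ≥ svals A (N-1)`; that is, `svals A ⟨j-1,_⟩` is the
paper's `s_j(A)`, the nonnegative square roots of the eigenvalues of `Aᴴ * A`. -/
noncomputable def svals {N : ℕ} (A : Matrix (Fin N) (Fin N) ℂ) : Fin N → ℝ :=
  fun i =>
    Real.sqrt ((Matrix.isHermitian_conjTranspose_mul_self A).eigenvalues
      (Tuple.sort ((Matrix.isHermitian_conjTranspose_mul_self A).eigenvalues) i.rev))

/-- The smallest singular value `s_n(A)` of a complex `(N+1) × (N+1)` matrix. -/
noncomputable def sMin {N : ℕ} (A : Matrix (Fin (N + 1)) (Fin (N + 1)) ℂ) : ℝ :=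
  svals A (Fin.last N)

/-- The spectral norm of a matrix: the operator norm induced by the Euclidean vector norm. -/
noncomputable def specNorm {N : ℕ} (A : Matrix (Fin N) (Fin N) ℂ) : ℝ :=
  ‖Matrix.toEuclideanCLM (𝕜 := ℂ) A‖

/-- Euclidean norm of a vector in `ℂ^N`. -/
noncomputable def enorm' {N : ℕ} (x : Fin N → ℂ) : ℝ :=
  ‖(WithLp.equiv 2 (Fin N → ℂ)).symm x‖

/-- Evaluation of the matrix polynomial `P(z) = Σ_{j=0}^m P_j z^j`. -/
noncomputable def polyEval {N m : ℕ} (P : Fin (m + 1) → Matrix (Fin N) (Fin N) ℂ) (z : ℂ) :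
    Matrix (Fin N) (Fin N) ℂ :=
  ∑ j : Fin (m + 1), z ^ (j : ℕ) • P j

/-- Evaluation of the derivative `P'(z) = Σ_{j=1}^m j P_j z^{j-1}`. -/
noncomputable def polyDerivEval {N m : ℕ} (P : Fin (m + 1) → Matrix (Fin N) (Fin N) ℂ)
    (z : ℂ) : Matrix (Fin N) (Fin N) ℂ :=
  ∑ j : Fin (m + 1), (((j : ℕ) : ℂ) * z ^ ((j : ℕ) - 1)) • P j

/-- Evaluation of the weight polynomial `w(x) = Σ_{j=0}^m w_j x^j`. -/
noncomputable def wEval {m : ℕ} (w : Fin (m + 1) → ℝ) (x : ℝ) : ℝ :=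
  ∑ j : Fin (m + 1), w j * x ^ (j : ℕ)

/-!
Put `A = P(μ)`, `σ = s_n(μ)`, and let `Π` be the orthogonal projection onto the eigenspace of
`Aᴴ A` for `σ²`, of dimension `k`. Since `(AΠ)ᴴ(AΠ) = σ² Π`, we get `‖AΠ‖ ≤ σ`, and because `A` is
invertible, `A - AΠ = A (1 - Π)` has a kernel of dimension `k`. Spreading `E = AΠ` over the
coefficients as `Δ_j = -(μ̄/|μ|)^j (w_j / w(|μ|)) E` gives `Q(μ) = A - E` and
`‖Δ_j‖ ≤ w_j σ / w(|μ|) ≤ ε w_j`.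
-/

open Unitary

namespace Matrix.IsHermitian

variable {𝕜 n : Type*} [RCLike 𝕜] [Fintype n] [DecidableEq n] {H : Matrix n n 𝕜}

noncomputable def eigenProj (hH : H.IsHermitian) (σ : ℝ) : Matrix n n 𝕜 :=
  conjStarAlgAut 𝕜 _ hH.eigenvectorUnitary
    (diagonal fun i => if hH.eigenvalues i = σ then 1 else 0)

variable (hH : H.IsHermitian) (σ : ℝ)

lemma isStarProjection_eigenProj : IsStarProjection (hH.eigenProj σ) := by
  refine IsStarProjection.map ⟨?_, ?_⟩ _
  · simp [IsIdempotentElem, diagonal_mul_diagonal]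
  · simp [IsSelfAdjoint, star_eq_conjTranspose, diagonal_conjTranspose, apply_ite]

lemma mul_eigenProj : H * hH.eigenProj σ = (σ : 𝕜) • hH.eigenProj σ := by
  calc H * hH.eigenProj σ
      = conjStarAlgAut 𝕜 _ hH.eigenvectorUnitary (diagonal (RCLike.ofReal ∘ hH.eigenvalues)) *
          hH.eigenProj σ := by rw [← hH.spectral_theorem]
    _ = (σ : 𝕜) • hH.eigenProj σ := by
      rw [eigenProj, ← map_mul, ← map_smul, diagonal_mul_diagonal, ← diagonal_smul]
      congr 2; ext i
      split_ifs with h <;> simp [h]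

lemma rank_one_sub_eigenProj :
    (1 - hH.eigenProj σ).rank = Fintype.card {i // hH.eigenvalues i ≠ σ} := by
  rw [eigenProj, ← map_one (conjStarAlgAut 𝕜 _ hH.eigenvectorUnitary), ← map_sub,
    conjStarAlgAut_apply, ← coe_star, rank_mul_eq_left_of_isUnit_det _ _ (UnitaryGroup.det_isUnit _),
    rank_mul_eq_right_of_isUnit_det _ _ (UnitaryGroup.det_isUnit _), ← diagonal_one,
    diagonal_sub, rank_diagonal]
  exact Fintype.card_congr (Equiv.subtypeEquivRight fun i => by split_ifs <;> simp [*])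

end Matrix.IsHermitian

section L2OpNorm

open scoped Matrix.Norms.L2Operator

lemma l2_opNorm_mul_eigenProj_conjTranspose_mul_self_le {𝕜 m n : Type*} [RCLike 𝕜] [Fintype m]
    [Fintype n] [DecidableEq n] (A : Matrix m n 𝕜) {σ : ℝ} (hσ : 0 ≤ σ) :
    ‖A * (isHermitian_conjTranspose_mul_self A).eigenProj σ‖ ≤ √σ := by
  have hPr := (isHermitian_conjTranspose_mul_self A).isStarProjection_eigenProj σ
  have hmul := (isHermitian_conjTranspose_mul_self A).mul_eigenProj σ
  set Pr := (isHermitian_conjTranspose_mul_self A).eigenProj σ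
  have hsq : ‖A * Pr‖ * ‖A * Pr‖ = σ * ‖Pr‖ := by
    rw [← l2_opNorm_conjTranspose_mul_self, conjTranspose_mul, ← star_eq_conjTranspose Pr,
      hPr.isSelfAdjoint.star_eq, Matrix.mul_assoc, ← Matrix.mul_assoc Aᴴ, hmul,
      Matrix.mul_smul, hPr.isIdempotentElem.eq, norm_smul, RCLike.norm_ofReal, abs_of_nonneg hσ]
  refine Real.le_sqrt_of_sq_le ?_
  nlinarith [hPr.norm_le, norm_nonneg Pr]

lemma specNorm_eq_l2_opNorm {N : ℕ} (A : Matrix (Fin N) (Fin N) ℂ) : specNorm A = ‖A‖ := rfl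

lemma specNorm_smul {N : ℕ} (c : ℂ) (A : Matrix (Fin N) (Fin N) ℂ) :
    specNorm (c • A) = ‖c‖ * specNorm A := by
  simp only [specNorm_eq_l2_opNorm, norm_smul]

end L2OpNorm

section SingularValues

variable {N : ℕ}

lemma svals_rev (A : Matrix (Fin N) (Fin N) ℂ) (p : Fin N) :
    svals A p.rev = √((isHermitian_conjTranspose_mul_self A).eigenvalues
      (Tuple.sort (isHermitian_conjTranspose_mul_self A).eigenvalues p)) := by
  simp only [svals, Fin.rev_rev]

variable (A : Matrix (Fin (N + 1)) (Fin (N + 1)) ℂ)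

lemma sMin_nonneg : 0 ≤ sMin A := Real.sqrt_nonneg _

lemma eigenvalues_sort_eq_sMin_sq_iff {k : ℕ} (hkn : k ≤ N + 1)
    (hmult1 : ∀ i : Fin (N + 1), N + 1 - k ≤ (i : ℕ) → svals A i = sMin A)
    (hmult2 : ∀ i : Fin (N + 1), (i : ℕ) < N + 1 - k → sMin A < svals A i)
    (p : Fin (N + 1)) :
    (isHermitian_conjTranspose_mul_self A).eigenvalues
      (Tuple.sort (isHermitian_conjTranspose_mul_self A).eigenvalues p) = sMin A ^ 2 ↔
      (p : ℕ) < k := by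
  constructor
  · intro h
    by_contra hp
    have hlt := hmult2 p.rev (by rw [Fin.val_rev]; omega)
    rw [svals_rev, h, Real.sqrt_sq (sMin_nonneg A)] at hlt
    exact hlt.false
  · intro hp
    rw [← Real.sq_sqrt (eigenvalues_conjTranspose_mul_self_nonneg A _), ← svals_rev,
      hmult1 p.rev (by rw [Fin.val_rev]; omega)]

lemma card_eigenvalues_ne_sMin_sq {k : ℕ} (hkn : k ≤ N + 1)
    (hmult1 : ∀ i : Fin (N + 1), N + 1 - k ≤ (i : ℕ) → svals A i = sMin A)
    (hmult2 : ∀ i : Fin (N + 1), (i : ℕ) < N + 1 - k → sMin A < svals A i) :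
    Fintype.card {i // (isHermitian_conjTranspose_mul_self A).eigenvalues i ≠ sMin A ^ 2} =
      N + 1 - k := by
  set eig := (isHermitian_conjTranspose_mul_self A).eigenvalues
  calc Fintype.card {i // eig i ≠ sMin A ^ 2}
      = Fintype.card {p // eig (Tuple.sort eig p) ≠ sMin A ^ 2} :=
        (Fintype.card_congr ((Tuple.sort eig).subtypeEquiv fun _ => Iff.rfl)).symm
    _ = Fintype.card {p : Fin (N + 1) // ¬(p : ℕ) < k} :=
        Fintype.card_congr <| Equiv.subtypeEquivRight fun p =>
          (eigenvalues_sort_eq_sMin_sq_iff A hkn hmult1 hmult2 p).not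
    _ = N + 1 - k := by
        rw [Fintype.card_subtype_compl, Fintype.card_subtype, Fin.card_filter_val_lt,
          Fintype.card_fin, min_eq_right hkn]

lemma specNorm_mul_eigenProj_le_sMin :
    specNorm (A * (isHermitian_conjTranspose_mul_self A).eigenProj (sMin A ^ 2)) ≤ sMin A := by
  calc _ ≤ √(sMin A ^ 2) := l2_opNorm_mul_eigenProj_conjTranspose_mul_self_le A (sq_nonneg _)
    _ = sMin A := Real.sqrt_sq (sMin_nonneg A)

end SingularValues

lemma Matrix.finrank_ker_mulVecLin_add_rank {K n : Type*} [Field K] [Fintype n]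
    (M : Matrix n n K) : Module.finrank K (LinearMap.ker M.mulVecLin) + M.rank = Fintype.card n := by
  rw [add_comm, rank, LinearMap.finrank_range_add_finrank_ker, Module.finrank_fintype_fun_eq_card]

lemma mul_conj_div_norm (μ : ℂ) : μ * (starRingEnd ℂ μ / ‖μ‖) = ‖μ‖ := by
  rw [← mul_div_assoc, Complex.mul_conj, Complex.normSq_eq_norm_sq]
  push_cast
  rw [sq, mul_self_div_self]

lemma norm_conj_div_norm_le_one (μ : ℂ) : ‖starRingEnd ℂ μ / ‖μ‖‖ ≤ 1 := by
  rw [norm_div, Complex.norm_conj, Complex.norm_real, norm_norm]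
  exact div_self_le_one _

lemma wEval_pos {m : ℕ} {w : Fin (m + 1) → ℝ} (hw : ∀ j, 0 ≤ w j) (hw0 : 0 < w 0) {x : ℝ}
    (hx : 0 ≤ x) : 0 < wEval w x :=
  sum_pos' (fun j _ => mul_nonneg (hw j) (pow_nonneg hx _))
    ⟨0, mem_univ _, by simpa using hw0⟩

lemma exists_perturbation_polyEval_eq_sub {N m : ℕ} (P : Fin (m + 1) → Matrix (Fin N) (Fin N) ℂ)
    {w : Fin (m + 1) → ℝ} (hw : ∀ j, 0 ≤ w j) {μ : ℂ} (hW : 0 < wEval w ‖μ‖) {ε : ℝ}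
    {E : Matrix (Fin N) (Fin N) ℂ} (hE : specNorm E ≤ ε * wEval w ‖μ‖) :
    ∃ Δ : Fin (m + 1) → Matrix (Fin N) (Fin N) ℂ, (∀ j, specNorm (Δ j) ≤ ε * w j) ∧
      ∑ j : Fin (m + 1), μ ^ (j : ℕ) • (P j + Δ j) = polyEval P μ - E := by
  set W := wEval w ‖μ‖
  -- `u = μ̄/|μ|` (which is `0` when `μ = 0`) satisfies `μ u = |μ|` and `|u| ≤ 1`
  set u := starRingEnd ℂ μ / ‖μ‖
  refine ⟨fun j => -(u ^ (j : ℕ) * ((w j / W : ℝ) : ℂ)) • E, fun j => ?_, ?_⟩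
  · have hu : ‖u‖ ^ (j : ℕ) ≤ 1 := pow_le_one₀ (norm_nonneg u) (norm_conj_div_norm_le_one μ)
    have hwW : 0 ≤ w j / W := div_nonneg (hw j) hW.le
    have hE0 : 0 ≤ specNorm E := norm_nonneg _
    calc specNorm (-(u ^ (j : ℕ) * ((w j / W : ℝ) : ℂ)) • E)
        = ‖u‖ ^ (j : ℕ) * (w j / W) * specNorm E := by
          rw [specNorm_smul, norm_neg, norm_mul, norm_pow, Complex.norm_real,
            Real.norm_of_nonneg hwW]
      _ ≤ 1 * (w j / W) * (ε * W) := by gcongr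
      _ = ε * w j := by field_simp
  · have hsum : ∑ j : Fin (m + 1), μ ^ (j : ℕ) * (u ^ (j : ℕ) * ((w j / W : ℝ) : ℂ)) = 1 := by
      calc ∑ j : Fin (m + 1), μ ^ (j : ℕ) * (u ^ (j : ℕ) * ((w j / W : ℝ) : ℂ))
          = ((∑ j : Fin (m + 1), w j * ‖μ‖ ^ (j : ℕ) / W : ℝ) : ℂ) := by
            push_cast
            refine sum_congr rfl fun j _ => ?_
            rw [← mul_assoc, ← mul_pow, mul_conj_div_norm]
            ring
        _ = 1 := by rw [← sum_div, ← wEval, div_self hW.ne', Complex.ofReal_one]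
    have hcoeff : ∑ j : Fin (m + 1), μ ^ (j : ℕ) * -(u ^ (j : ℕ) * ((w j / W : ℝ) : ℂ)) = -1 := by
      simp only [mul_neg, sum_neg_distrib, hsum]
    simp only [polyEval, smul_add, sum_add_distrib, smul_smul, ← sum_smul, hcoeff, neg_one_smul,
      sub_eq_add_neg]

theorem stmt11_general {n m : ℕ} (P : Fin (m + 1) → Matrix (Fin (n + 1)) (Fin (n + 1)) ℂ)
    (w : Fin (m + 1) → ℝ) (hw : ∀ j, 0 ≤ w j) (hw0 : 0 < w 0) (ε : ℝ)
    (μ : ℂ) (hμps : sMin (polyEval P μ) ≤ ε * wEval w (‖μ‖))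
    (hμns : (polyEval P μ).det ≠ 0)
    (k : ℕ) (hkn : k ≤ n + 1)
    (hmult1 : ∀ i : Fin (n + 1), n + 1 - k ≤ (i : ℕ) →
      svals (polyEval P μ) i = sMin (polyEval P μ))
    (hmult2 : ∀ i : Fin (n + 1), (i : ℕ) < n + 1 - k →
      sMin (polyEval P μ) < svals (polyEval P μ) i) :
    ∃ Δ : Fin (m + 1) → Matrix (Fin (n + 1)) (Fin (n + 1)) ℂ,
      (∀ j, specNorm (Δ j) ≤ ε * w j) ∧
        Module.finrank ℂ
          (LinearMap.ker (∑ j : Fin (m + 1), μ ^ (j : ℕ) • (P j + Δ j)).mulVecLin)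
            = k := by
  set A := polyEval P μ
  set Pr := (isHermitian_conjTranspose_mul_self A).eigenProj (sMin A ^ 2)
  obtain ⟨Δ, hΔ, hQ⟩ := exists_perturbation_polyEval_eq_sub P hw
    (wEval_pos hw hw0 (norm_nonneg μ)) ((specNorm_mul_eigenProj_le_sMin A).trans hμps)
  refine ⟨Δ, hΔ, ?_⟩
  have hrank := finrank_ker_mulVecLin_add_rank (A * (1 - Pr))
  rw [rank_mul_eq_right_of_isUnit_det _ _ (isUnit_iff_ne_zero.2 hμns),
    IsHermitian.rank_one_sub_eigenProj, card_eigenvalues_ne_sMin_sq A hkn hmult1 hmult2,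
    Fintype.card_fin] at hrank
  have hQμ : polyEval P μ - A * Pr = A * (1 - Pr) := by rw [Matrix.mul_sub, Matrix.mul_one]
  rw [hQ, hQμ]
  omega

/-- If `μ ∈ Λ_ε(P) \ σ(P)` and the smallest singular value of `P(μ)`
has multiplicity `k`, then some `Q ∈ B(P,ε,w)` has `μ` as an eigenvalue of geometric
multiplicity exactly `k`. -/
theorem stmt11 {n m : ℕ} (P : Fin (m + 1) → Matrix (Fin (n + 1)) (Fin (n + 1)) ℂ)
    (w : Fin (m + 1) → ℝ) (hw : ∀ j, 0 ≤ w j) (hw0 : 0 < w 0) (ε : ℝ) (hε : 0 < ε)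
    (μ : ℂ) (hμps : sMin (polyEval P μ) ≤ ε * wEval w (‖μ‖))
    (hμns : (polyEval P μ).det ≠ 0)
    (k : ℕ) (hk : 0 < k) (hkn : k ≤ n + 1)
    (hmult1 : ∀ i : Fin (n + 1), n + 1 - k ≤ (i : ℕ) →
      svals (polyEval P μ) i = sMin (polyEval P μ))
    (hmult2 : ∀ i : Fin (n + 1), (i : ℕ) < n + 1 - k →
      sMin (polyEval P μ) < svals (polyEval P μ) i) :
    ∃ Δ : Fin (m + 1) → Matrix (Fin (n + 1)) (Fin (n + 1)) ℂ,
      (∀ j, specNorm (Δ j) ≤ ε * w j) ∧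
        Module.finrank ℂ
          (LinearMap.ker (∑ j : Fin (m + 1), μ ^ (j : ℕ) • (P j + Δ j)).mulVecLin)
            = k :=
  stmt11_general P w hw hw0 ε μ hμps hμns k hkn hmult1 hmult2
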